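/- arXiv:2408.13971 — 2 statements merged into one kernel-verified Lean document; each statement's English description precedes it below -/
import Mathlib

section
/- If 0 ≤ α < √(2π), then the Bayesian Nash equilibrium system Pᵢ = Φ(cᵢ + α·(1/|Fᵢ|)·Σ_{j∈Fᵢ} Pⱼ), i = 1,…,n, has exactly one solution P* ∈ [0,1]ⁿ. -/
open MeasureTheory Real Filter

noncomputable def stdGaussianPDF (x : ℝ) : ℝ :=
  (Real.sqrt (2 * Real.pi))⁻¹ * Real.exp (-x ^ 2 / 2)

noncomputable def stdGaussianCDF (x : ℝ) : ℝ := ∫ t in Set.Iic x, stdGaussianPDF t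

open ProbabilityTheory NNReal Finset Function

/-! The best-response map `P ↦ (Φ (cᵢ + α · mean of P over Fᵢ))ᵢ` is Lipschitz in the sup norm with
constant `α · sup φ = α / √(2π)`, since the standard normal density `φ` is bounded by `1 / √(2π)` and
averaging is 1-Lipschitz. For `α < √(2π)` it is therefore a contraction of `ℝⁿ`, whose unique fixed
point lies in `[0,1]ⁿ` because `Φ` does. -/

theorem lipschitzWith_integral_Iic {f : ℝ → ℝ} {M : ℝ≥0} (hf : Integrable f)
    (hM : ∀ t, ‖f t‖ ≤ M) : LipschitzWith M fun x ↦ ∫ t in Set.Iic x, f t := by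
  refine LipschitzWith.of_dist_le_mul fun x y ↦ ?_
  rw [dist_eq_norm, intervalIntegral.integral_Iic_sub_Iic hf.integrableOn hf.integrableOn,
    dist_comm, dist_eq_norm_sub']
  exact intervalIntegral.norm_integral_le_of_norm_le_const fun t _ ↦ hM t

theorem stdGaussianPDF_eq_gaussianPDFReal : stdGaussianPDF = gaussianPDFReal 0 1 := by
  ext x
  simp [stdGaussianPDF, gaussianPDFReal]

theorem norm_stdGaussianPDF_le (x : ℝ) : ‖stdGaussianPDF x‖ ≤ (NNReal.sqrt (2 * NNReal.pi))⁻¹ := by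
  have hexp : rexp (-x ^ 2 / 2) ≤ 1 := exp_le_one_iff.2 (by nlinarith [sq_nonneg x])
  rw [Real.norm_of_nonneg (by unfold stdGaussianPDF; positivity)]
  push_cast
  unfold stdGaussianPDF
  exact mul_le_of_le_one_right (by positivity) hexp

theorem lipschitzWith_stdGaussianCDF :
    LipschitzWith (NNReal.sqrt (2 * NNReal.pi))⁻¹ stdGaussianCDF :=
  lipschitzWith_integral_Iic (stdGaussianPDF_eq_gaussianPDFReal ▸ integrable_gaussianPDFReal 0 1)
    norm_stdGaussianPDF_le

theorem stdGaussianCDF_mem_Icc (x : ℝ) : stdGaussianCDF x ∈ Set.Icc (0 : ℝ) 1 := by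
  rw [stdGaussianCDF, stdGaussianPDF_eq_gaussianPDFReal]
  refine ⟨setIntegral_nonneg measurableSet_Iic fun t _ ↦ gaussianPDFReal_nonneg 0 1 t, ?_⟩
  calc ∫ t in Set.Iic x, gaussianPDFReal 0 1 t ≤ ∫ t, gaussianPDFReal 0 1 t :=
        setIntegral_le_integral (integrable_gaussianPDFReal 0 1)
          (.of_forall (gaussianPDFReal_nonneg 0 1))
    _ = 1 := integral_gaussianPDFReal_eq_one 0 one_ne_zero

theorem abs_sum_div_card_sub_sum_div_card_le {κ : Type*} [Fintype κ] (s : Finset κ)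
    (P Q : κ → ℝ) : |(∑ j ∈ s, P j) / #s - (∑ j ∈ s, Q j) / #s| ≤ dist P Q := by
  rcases s.eq_empty_or_nonempty with rfl | hs
  · simp
  have hcard : (0 : ℝ) < #s := by exact_mod_cast hs.card_pos
  rw [div_sub_div_same, ← sum_sub_distrib, abs_div, abs_of_pos hcard, div_le_iff₀ hcard]
  calc |∑ j ∈ s, (P j - Q j)| ≤ ∑ j ∈ s, |P j - Q j| := abs_sum_le_sum_abs _ _
    _ ≤ ∑ _j ∈ s, dist P Q := sum_le_sum fun j _ ↦ dist_le_pi_dist P Q j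
    _ = dist P Q * #s := by rw [sum_const, nsmul_eq_mul, mul_comm]

theorem lipschitzWith_comp_affine_neighbourAverage {ι κ : Type*} [Fintype ι] [Fintype κ]
    {g : ℝ → ℝ} {K : ℝ≥0} (hg : LipschitzWith K g) (c : ι → ℝ) (α : ℝ) (F : ι → Finset κ) :
    LipschitzWith (‖α‖₊ * K)
      fun (P : κ → ℝ) i ↦ g (c i + α * ((∑ j ∈ F i, P j) / #(F i))) := by
  refine LipschitzWith.of_dist_le_mul fun P Q ↦ (dist_pi_le_iff (by positivity)).2 fun i ↦ ?_
  calc dist (g (c i + α * ((∑ j ∈ F i, P j) / #(F i))))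
        (g (c i + α * ((∑ j ∈ F i, Q j) / #(F i))))
      ≤ K * dist (c i + α * ((∑ j ∈ F i, P j) / #(F i))) (c i + α * ((∑ j ∈ F i, Q j) / #(F i))) :=
        hg.dist_le_mul _ _
    _ = K * |α * ((∑ j ∈ F i, P j) / #(F i)) - α * ((∑ j ∈ F i, Q j) / #(F i))| := by
        rw [dist_add_left, Real.dist_eq]
    _ ≤ K * (‖α‖ * dist P Q) := by
        rw [← mul_sub, abs_mul, ← Real.norm_eq_abs]
        gcongr
        exact abs_sum_div_card_sub_sum_div_card_le _ P Q
    _ = ‖α‖₊ * K * dist P Q := by push_cast; ring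

theorem treatment_bne_unique_general (n : ℕ) (α : ℝ)
    (hα0 : 0 ≤ α) (hα : α < Real.sqrt (2 * Real.pi))
    (c : Fin n → ℝ) (F : Fin n → Finset (Fin n)) :
    ∃! P : Fin n → ℝ, (∀ i, P i ∈ Set.Icc (0:ℝ) 1) ∧
      ∀ i, P i = stdGaussianCDF (c i + α * ((∑ j ∈ F i, P j) / (F i).card)) := by
  set T : (Fin n → ℝ) → Fin n → ℝ :=
    fun P i ↦ stdGaussianCDF (c i + α * ((∑ j ∈ F i, P j) / #(F i)))
  have hK : ‖α‖₊ * (NNReal.sqrt (2 * NNReal.pi))⁻¹ < 1 := by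
    rw [← NNReal.coe_lt_coe]
    push_cast [NNReal.coe_real_pi]
    rw [Real.norm_of_nonneg hα0, mul_inv_lt_iff₀ (by positivity), one_mul]
    exact hα
  have hT : ContractingWith _ T :=
    ⟨hK, lipschitzWith_comp_affine_neighbourAverage lipschitzWith_stdGaussianCDF c α F⟩
  have hfixed : ∀ P, IsFixedPt T P ↔ ∀ i, P i = T P i := fun P ↦ by
    rw [IsFixedPt, funext_iff]
    exact forall_congr' fun i ↦ eq_comm
  refine ⟨hT.fixedPoint T, ⟨fun i ↦ ?_, (hfixed _).1 hT.fixedPoint_isFixedPt⟩, ?_⟩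
  · rw [(hfixed _).1 hT.fixedPoint_isFixedPt i]
    exact stdGaussianCDF_mem_Icc _
  · rintro Q ⟨-, hQ⟩
    exact hT.fixedPoint_unique ((hfixed Q).2 hQ)

theorem treatment_bne_unique (n : ℕ) (α : ℝ)
    (hα0 : 0 ≤ α) (hα : α < Real.sqrt (2 * Real.pi))
    (c : Fin n → ℝ) (F : Fin n → Finset (Fin n)) (hF : ∀ i, (F i).Nonempty) :
    ∃! P : Fin n → ℝ, (∀ i, P i ∈ Set.Icc (0:ℝ) 1) ∧
      ∀ i, P i = stdGaussianCDF (c i + α * ((∑ j ∈ F i, P j) / (F i).card)) :=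
  treatment_bne_unique_general n α hα0 hα c F
end

section
/- Let Γ : [0,1]ⁿ → [0,1]ⁿ with Γᵢ(P) = Φ(cᵢ + α·Vᵢ(P)), Vᵢ(P) = (1/|Fᵢ|)Σ_{j∈Fᵢ}Pⱼ, and 0 ≤ α < √(2π). If α ≥ 0 and c ≤ c' coordinatewise, then the unique fixed points satisfy P*(c) ≤ P*(c') coordinatewise. -/
open MeasureTheory Real Filter

/-!
Write `u = P - Q` and let `d = u i₀ > 0` be its maximum if `P ≤ Q` failed. Averaging over the
neighbourhood `F i₀` moves the argument of `Φ` by at most `α d` more for `P` than for `Q`, and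
`Φ` is monotone with slope at most `1 / √(2π)`, so `d ≤ (α / √(2π)) d < d`.
-/

lemma stdGaussianPDF_nonneg (x : ℝ) : 0 ≤ stdGaussianPDF x := by
  unfold stdGaussianPDF; positivity

lemma stdGaussianPDF_le (x : ℝ) : stdGaussianPDF x ≤ (Real.sqrt (2 * Real.pi))⁻¹ := by
  unfold stdGaussianPDF
  refine mul_le_of_le_one_right (by positivity) (Real.exp_le_one_iff.2 ?_)
  nlinarith [sq_nonneg x]

lemma integrable_stdGaussianPDF : Integrable stdGaussianPDF := by
  convert (integrable_exp_neg_mul_sq (b := 1 / 2) (by norm_num)).const_mul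
    (Real.sqrt (2 * Real.pi))⁻¹ using 2 with x
  unfold stdGaussianPDF
  ring_nf

lemma stdGaussianCDF_mono : Monotone stdGaussianCDF := fun _ _ hab =>
  setIntegral_mono_set integrable_stdGaussianPDF.integrableOn
    (Eventually.of_forall stdGaussianPDF_nonneg) (Set.Iic_subset_Iic.2 hab).eventuallyLE

lemma stdGaussianCDF_sub_le_of_le {a b : ℝ} (hab : a ≤ b) :
    stdGaussianCDF b - stdGaussianCDF a ≤ (b - a) / Real.sqrt (2 * Real.pi) := by
  unfold stdGaussianCDF
  rw [intervalIntegral.integral_Iic_sub_Iic integrable_stdGaussianPDF.integrableOn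
    integrable_stdGaussianPDF.integrableOn, intervalIntegral.integral_of_le hab]
  calc ∫ t in Set.Ioc a b, stdGaussianPDF t
      ≤ ∫ _ in Set.Ioc a b, (Real.sqrt (2 * Real.pi))⁻¹ :=
        setIntegral_mono_on integrable_stdGaussianPDF.integrableOn
          (integrableOn_const measure_Ioc_lt_top.ne) measurableSet_Ioc
          fun x _ => stdGaussianPDF_le x
    _ = (b - a) / Real.sqrt (2 * Real.pi) := by
        rw [setIntegral_const, measureReal_def, Real.volume_Ioc,
          ENNReal.toReal_ofReal (by linarith), smul_eq_mul, div_eq_mul_inv]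

lemma stdGaussianCDF_sub_le_max (x y : ℝ) :
    stdGaussianCDF x - stdGaussianCDF y ≤ max (x - y) 0 / Real.sqrt (2 * Real.pi) := by
  rcases le_total x y with hxy | hyx
  · have := stdGaussianCDF_mono hxy
    have : 0 ≤ max (x - y) 0 / Real.sqrt (2 * Real.pi) := by positivity
    linarith
  · rw [max_eq_left (sub_nonneg.2 hyx)]
    exact stdGaussianCDF_sub_le_of_le hyx

lemma Finset.sum_div_card_sub_sum_div_card_le {ι : Type*} {s : Finset ι} (hs : s.Nonempty)
    {P Q : ι → ℝ} {d : ℝ} (h : ∀ j ∈ s, P j - Q j ≤ d) :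
    (∑ j ∈ s, P j) / s.card - (∑ j ∈ s, Q j) / s.card ≤ d := by
  have hcard : (0 : ℝ) < s.card := by exact_mod_cast hs.card_pos
  rw [div_sub_div_same, ← Finset.sum_sub_distrib, div_le_iff₀ hcard, mul_comm,
    ← nsmul_eq_mul]
  exact Finset.sum_le_card_nsmul s _ d h

lemma nonpos_of_forall_le_mul_of_forall_le {ι : Type*} [Finite ι] {u : ι → ℝ} {q : ℝ}
    (hq : q < 1) (h : ∀ d, 0 < d → (∀ j, u j ≤ d) → ∀ i, u i ≤ q * d) (i : ι) : u i ≤ 0 := by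
  have := Fintype.ofFinite ι
  obtain ⟨i₀, -, hmax⟩ := Finset.univ.exists_max_image u ⟨i, Finset.mem_univ i⟩
  by_contra! hi
  have hd : 0 < u i₀ := hi.trans_le (hmax i (Finset.mem_univ i))
  have := h (u i₀) hd (fun j => hmax j (Finset.mem_univ j)) i₀
  nlinarith

theorem equilibrium_monotone_comparative_statics (n : ℕ) (α : ℝ)
    (hα0 : 0 ≤ α) (hα : α < Real.sqrt (2 * Real.pi))
    (F : Fin n → Finset (Fin n)) (hF : ∀ i, (F i).Nonempty)
    (c c' : Fin n → ℝ) (hcc : ∀ i, c i ≤ c' i)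
    (P Q : Fin n → ℝ)
    (hP : ∀ i, P i = stdGaussianCDF (c i + α * ((∑ j ∈ F i, P j) / (F i).card)))
    (hQ : ∀ i, Q i = stdGaussianCDF (c' i + α * ((∑ j ∈ F i, Q j) / (F i).card))) :
    ∀ i, P i ≤ Q i := by
  have hK : 0 < Real.sqrt (2 * Real.pi) := Real.sqrt_pos.2 (by positivity)
  refine fun i => sub_nonpos.1 <| nonpos_of_forall_le_mul_of_forall_le (u := P - Q)
    ((div_lt_one hK).2 hα) (fun d hd hu j => ?_) i
  have hgap : c j + α * ((∑ k ∈ F j, P k) / (F j).card)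
      - (c' j + α * ((∑ k ∈ F j, Q k) / (F j).card)) ≤ α * d := by
    have := mul_le_mul_of_nonneg_left
      (Finset.sum_div_card_sub_sum_div_card_le (hF j) fun k _ => hu k) hα0
    linarith [hcc j]
  rw [Pi.sub_apply, hP j, hQ j]
  calc _ ≤ max _ 0 / Real.sqrt (2 * Real.pi) := stdGaussianCDF_sub_le_max _ _
    _ ≤ α * d / Real.sqrt (2 * Real.pi) := by gcongr; exact max_le hgap (by positivity)
    _ = α / Real.sqrt (2 * Real.pi) * d := by ring
end
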